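/- Let n be even and for 1 ≤ a ≤ n/2 consider the translates P + a and P + (n/2 + a) of the path P on vertex set {0,1} × Z_n with edges {(0,0),(0,n/2)}, {(0,n/2),(1,n/2)}, {(1,n/2),(1,0)}, together with translates of the switched path P* with edges {(0,0),(1,n/2)}, {(1,n/2),(0,n/2)}, {(0,n/2),(1,0)} in the same pattern. Then every edge of the form {(i,a),(j,a+n/2)} of the complete graph on {0,1} × Z_n is contained in P + a or P* + (n/2 + a) for some 1 ≤ a ≤ n/2. -/

import Mathlib

/-- Translation by `g` on `{0,1} × Z_n`. -/
def shiftPair {n : ℕ} (g : ZMod n) : (Bool × ZMod n) ≃ (Bool × ZMod n) :=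
  (Equiv.refl Bool).prodCongr (Equiv.addRight g)

/-- `n/2` as an element of `Z_n`. -/
def obHalf (n : ℕ) : ZMod n := ((n / 2 : ℕ) : ZMod n)

/-- The path `P` with edges {(0,0),(0,n/2)}, {(0,n/2),(1,n/2)}, {(1,n/2),(1,0)}. -/
def pathPgraph (n : ℕ) : SimpleGraph (Bool × ZMod n) :=
  SimpleGraph.fromEdgeSet
    { s(((false : Bool), (0 : ZMod n)), (false, obHalf n)),
      s((false, obHalf n), (true, obHalf n)),
      s((true, obHalf n), ((true : Bool), (0 : ZMod n))) }

/-- The switched path `P*` with edges {(0,0),(1,n/2)}, {(1,n/2),(0,n/2)}, {(0,n/2),(1,0)}. -/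
def pathPstarGraph (n : ℕ) : SimpleGraph (Bool × ZMod n) :=
  SimpleGraph.fromEdgeSet
    { s(((false : Bool), (0 : ZMod n)), (true, obHalf n)),
      s((true, obHalf n), (false, obHalf n)),
      s((false, obHalf n), ((true : Bool), (0 : ZMod n))) }

/-!
Write `h = n/2 ∈ ℤ_n`, so `h + h = 0`. Translating back by `b`, the edge `{(i,a),(j,a+h)}` lies in
`P + b` iff `{(i,c),(j,c+h)}` lies in `P`, where `c = a - b`, and it lies in `P* + (h + b)` iff
`{(i,c+h),(j,c)}` lies in `P*`. Since `1, …, n/2` together with their translates by `h` cover `ℤ_n`,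
`b` can be chosen with `c ∈ {0, h}`; then `P` contains the edge when `i = j` and `P*` when `i ≠ j`.
-/

variable {n : ℕ}

lemma obHalf_add_obHalf (hn : Even n) : obHalf n + obHalf n = 0 := by
  rw [obHalf, ← Nat.cast_add, ← two_mul, Nat.mul_div_cancel' hn.two_dvd, ZMod.natCast_self]

lemma obHalf_ne_zero (h2 : 2 ≤ n) : obHalf n ≠ 0 := by
  have : NeZero n := ⟨by omega⟩
  rw [obHalf, Ne, ZMod.natCast_eq_zero_iff]
  exact Nat.not_dvd_of_pos_of_lt (by omega) (by omega)

lemma adj_map_shiftPair (G : SimpleGraph (Bool × ZMod n)) (g : ZMod n) (i j : Bool) (x y : ZMod n) :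
    (G.map (shiftPair g).toEmbedding).Adj (i, x) (j, y) ↔ G.Adj (i, x - g) (j, y - g) := by
  have hshift (k : Bool) (z : ZMod n) : (k, z) = (shiftPair g).toEmbedding (k, z - g) := by
    simp [shiftPair]
  rw [hshift i x, hshift j y, SimpleGraph.map_adj_apply]

lemma pathPgraph_adj_add_obHalf (hn : Even n) (h2 : 2 ≤ n) (i : Bool) {c : ZMod n}
    (hc : c = 0 ∨ c = obHalf n) : (pathPgraph n).Adj (i, c) (i, c + obHalf n) := by
  have hne := obHalf_ne_zero h2
  rcases hc with rfl | rfl <;> cases i <;>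
    simp [pathPgraph, obHalf_add_obHalf hn, hne, hne.symm]

lemma pathPstarGraph_adj_of_ne {i j : Bool} (hij : i ≠ j) (hn : Even n) {c : ZMod n}
    (hc : c = 0 ∨ c = obHalf n) : (pathPstarGraph n).Adj (i, c + obHalf n) (j, c) := by
  rcases hc with rfl | rfl <;> cases i <;> cases j <;>
    simp_all [pathPstarGraph, obHalf_add_obHalf hn]

lemma exists_sub_natCast_eq_zero_or_obHalf (hn : Even n) (h2 : 2 ≤ n) (a : ZMod n) :
    ∃ b : ℕ, 1 ≤ b ∧ b ≤ n / 2 ∧ (a - b = 0 ∨ a - b = obHalf n) := by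
  have : NeZero n := ⟨by omega⟩
  have := a.val_lt
  rw [← ZMod.natCast_zmod_val a]
  obtain h0 | hsmall | hlarge : a.val = 0 ∨ (1 ≤ a.val ∧ a.val ≤ n / 2) ∨ n / 2 < a.val := by omega
  · refine ⟨n / 2, by omega, le_rfl, Or.inr ?_⟩
    rw [h0, Nat.cast_zero, zero_sub]
    exact neg_eq_of_add_eq_zero_right (obHalf_add_obHalf hn)
  · exact ⟨a.val, hsmall.1, hsmall.2, Or.inl (sub_self _)⟩
  · refine ⟨a.val - n / 2, by omega, by omega, Or.inr ?_⟩
    rw [Nat.cast_sub hlarge.le, sub_sub_cancel, obHalf]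

theorem stmt13 (n : ℕ) (hn : Even n) (hpos : 0 < n) :
    ∀ (i j : Bool) (a : ZMod n), (i, a) ≠ (j, a + obHalf n) →
      ∃ b : ℕ, 1 ≤ b ∧ b ≤ n / 2 ∧
        (((pathPgraph n).map (shiftPair (b : ZMod n)).toEmbedding).Adj
            (i, a) (j, a + obHalf n) ∨
         ((pathPstarGraph n).map (shiftPair ((n / 2 + b : ℕ) : ZMod n)).toEmbedding).Adj
            (i, a) (j, a + obHalf n)) := by
  intro i j a _
  have h2 : 2 ≤ n := by obtain ⟨k, rfl⟩ := hn; omega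
  obtain ⟨b, hb1, hb2, hc⟩ := exists_sub_natCast_eq_zero_or_obHalf hn h2 a
  refine ⟨b, hb1, hb2, ?_⟩
  have hhalf := obHalf_add_obHalf hn
  have hPstar : ((n / 2 + b : ℕ) : ZMod n) = obHalf n + b := by rw [Nat.cast_add, obHalf]
  rw [adj_map_shiftPair, adj_map_shiftPair, hPstar]
  have hx : a - (obHalf n + b) = a - b + obHalf n := by linear_combination -hhalf
  have hy : a + obHalf n - (obHalf n + b) = a - b := by ring
  rw [hx, hy, add_sub_right_comm]
  by_cases hij : i = j
  · subst hij
    exact Or.inl (pathPgraph_adj_add_obHalf hn h2 i hc)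
  · exact Or.inr (pathPstarGraph_adj_of_ne hij hn hc)
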